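/- arXiv:2005.12233 — 4 statements merged into one kernel-verified Lean document; each statement's English description precedes it below -/
import Mathlib

section
/- Let α ∈ (0, d) and let E ⊂ ℝ^d be the fractal lattice set E = ∩_i E_i, where for a rapidly increasing sequence of integers q_i, E_i is the union over u ∈ {0,1,…,q_i}^d of the open balls of radius q_i^{−d/α} centered at u/q_i. Then E is not Ahlfors–David regular: there is no Borel probability measure μ on E and constants 0 < c < C with c·r^α ≤ μ(B(x,r)) ≤ C·r^α for all x ∈ E and r ∈ (0, diam E). -/
/-!
Around `0 ∈ E`, the ball `B(0, R_i)` with `R_i = q_i^{-d/α}` has mass at least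
`c R_i^α = c q_i^{-d}`. Inside it, `E` is covered by balls of generation `i + 1`, of radius
`R_{i+1}`, centred on a grid of mesh `1 / q_{i+1}`: about `(q_{i+1} R_i)^d` of them, each of
mass at most `C (2 R_{i+1})^α = C 2^α q_{i+1}^{-d}`. Hence
`c ≤ C 2^α (3 q_i R_i)^d = C 2^α 3^d q_i^{d(1-d/α)}`, which tends to `0` because `α < d` and
`q_i → ∞`.
-/

open MeasureTheory ENNReal

/-- The fractal lattice set `E = ∩_i E_i`, where `E_i` is the union over
`u ∈ {0,1,…,q_i}^d` of the open balls of radius `q_i^{-d/α}` centered at `u/q_i`. -/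
noncomputable def latticeSet (d : ℕ) (α : ℝ) (q : ℕ → ℕ) : Set (EuclideanSpace ℝ (Fin d)) :=
  ⋂ i, ⋃ u ∈ {u : Fin d → ℕ | ∀ j, u j ≤ q i},
    Metric.ball ((WithLp.equiv 2 (Fin d → ℝ)).symm (fun j => (u j : ℝ) / (q i : ℝ)))
      ((q i : ℝ) ^ (-(d : ℝ) / α))

open Metric Filter Topology Finset

section AhlforsDavidRegular

variable {X : Type*} [PseudoMetricSpace X] [MeasurableSpace X]

def IsAhlforsDavidRegularOn (μ : Measure X) (E : Set X) (α c C : ℝ) : Prop :=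
  ∀ x ∈ E, ∀ r : ℝ, 0 < r → r < diam E →
    ENNReal.ofReal (c * r ^ α) ≤ μ (ball x r) ∧ μ (ball x r) ≤ ENNReal.ofReal (C * r ^ α)

variable {μ : Measure X} {E : Set X} {α c C : ℝ}

lemma IsAhlforsDavidRegularOn.measure_ball_le (hμ : IsAhlforsDavidRegularOn μ E α c C)
    (hE : μ Eᶜ = 0) (p : X) {s : ℝ} (hs : 0 < s) (hsE : 2 * s < diam E) :
    μ (ball p s) ≤ ENNReal.ofReal (C * (2 * s) ^ α) := by
  by_cases hmeet : (ball p s ∩ E).Nonempty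
  · obtain ⟨y, hyp, hyE⟩ := hmeet
    have hsub : ball p s ⊆ ball y (2 * s) :=
      ball_subset_ball' (by rw [dist_comm]; linarith [mem_ball.mp hyp])
    exact (measure_mono hsub).trans (hμ y hyE (2 * s) (by positivity) hsE).2
  · have hsub : ball p s ⊆ Eᶜ := fun z hz hzE => hmeet ⟨z, hz, hzE⟩
    rw [measure_mono_null hsub hE]
    exact zero_le

lemma IsAhlforsDavidRegularOn.measure_le_card_nsmul {ι : Type*}
    (hμ : IsAhlforsDavidRegularOn μ E α c C) (hE : μ Eᶜ = 0) {A : Set X} (S : Finset ι)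
    (p : ι → X) {s : ℝ} (hs : 0 < s) (hsE : 2 * s < diam E)
    (hcover : A ∩ E ⊆ ⋃ v ∈ S, ball (p v) s) :
    μ A ≤ #S • ENNReal.ofReal (C * (2 * s) ^ α) :=
  calc μ A = μ (A ∩ E) := (measure_inter_conull hE).symm
    _ ≤ ∑ v ∈ S, μ (ball (p v) s) :=
      (measure_mono hcover).trans (measure_biUnion_finset_le S _)
    _ ≤ #S • ENNReal.ofReal (C * (2 * s) ^ α) :=
      sum_le_card_nsmul S _ _ fun v _ => hμ.measure_ball_le hE (p v) hs hsE

end AhlforsDavidRegular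

section LatticeSet

variable {d : ℕ} {α : ℝ} {q : ℕ → ℕ}

noncomputable def latticePoint (n : ℕ) (u : Fin d → ℕ) : EuclideanSpace ℝ (Fin d) :=
  (WithLp.equiv 2 (Fin d → ℝ)).symm fun j => (u j : ℝ) / n

noncomputable def latticeRadius (d : ℕ) (α : ℝ) (n : ℕ) : ℝ :=
  (n : ℝ) ^ (-(d : ℝ) / α)

lemma mem_latticeSet_iff {x : EuclideanSpace ℝ (Fin d)} :
    x ∈ latticeSet d α q ↔
      ∀ i, ∃ u : Fin d → ℕ, (∀ j, u j ≤ q i) ∧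
        dist x (latticePoint (q i) u) < latticeRadius d α (q i) := by
  simp only [latticeSet, latticePoint, latticeRadius, Set.mem_iInter, Set.mem_iUnion,
    Set.mem_ofPred_eq, mem_ball, exists_prop]

lemma latticeRadius_pos {n : ℕ} (hn : 0 < n) : 0 < latticeRadius d α n :=
  Real.rpow_pos_of_pos (Nat.cast_pos.mpr hn) _

lemma latticeRadius_rpow (hα : α ≠ 0) (n : ℕ) :
    latticeRadius d α n ^ α = ((n : ℝ)⁻¹) ^ d := by
  rw [latticeRadius, ← Real.rpow_mul n.cast_nonneg, div_mul_cancel₀ _ hα, Real.rpow_neg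
    n.cast_nonneg, Real.rpow_natCast, inv_pow]

lemma latticeRadius_anti (hα : 0 < α) {m n : ℕ} (hm : 0 < m) (hmn : m ≤ n) :
    latticeRadius d α n ≤ latticeRadius d α m :=
  Real.rpow_le_rpow_of_nonpos (Nat.cast_pos.mpr hm) (Nat.cast_le.mpr hmn)
    (div_nonpos_of_nonpos_of_nonneg (neg_nonpos.mpr d.cast_nonneg) hα.le)

lemma two_mul_latticeRadius_lt_one (hα : 0 < α) (hαd : α < d) {n : ℕ} (hn : 2 ≤ n) :
    2 * latticeRadius d α n < 1 := by
  have hn' : (2 : ℝ) ≤ n := by exact_mod_cast hn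
  have hexp : -(d : ℝ) / α < -1 := by
    rw [div_lt_iff₀ hα]
    linarith
  calc 2 * latticeRadius d α n < 2 * (n : ℝ) ^ (-1 : ℝ) := by
        gcongr
        exact Real.rpow_lt_rpow_of_exponent_lt (by linarith) hexp
    _ ≤ 1 := by
        rw [Real.rpow_neg_one, ← div_eq_mul_inv, div_le_one (by linarith)]
        exact hn'

lemma natCast_mul_latticeRadius {n : ℕ} (hn : 0 < n) :
    n * latticeRadius d α n = (n : ℝ) ^ (-((d : ℝ) / α - 1)) := by
  rw [latticeRadius, neg_sub, sub_eq_add_neg, Real.rpow_add (Nat.cast_pos.mpr hn),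
    Real.rpow_one, neg_div]

lemma one_le_pow_mul_latticeRadius {n k : ℕ} (hn : 1 ≤ n)
    (hk : (d : ℝ) / α ≤ k) : 1 ≤ ((n ^ k : ℕ) : ℝ) * latticeRadius d α n := by
  have hn' : (1 : ℝ) ≤ n := by exact_mod_cast hn
  rw [latticeRadius, Nat.cast_pow, ← Real.rpow_natCast, ← Real.rpow_add (by linarith)]
  exact Real.one_le_rpow hn' (by rw [neg_div]; linarith)

lemma zero_mem_latticeSet (hq : ∀ i, 0 < q i) : 0 ∈ latticeSet d α q := by
  refine mem_latticeSet_iff.mpr fun i => ⟨0, fun _ => zero_le, ?_⟩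
  have hpt : latticePoint (q i) (0 : Fin d → ℕ) = 0 := by
    ext j
    simp [latticePoint]
  simpa [hpt] using latticeRadius_pos (hq i)

lemma one_mem_latticeSet (hq : ∀ i, 0 < q i) :
    (WithLp.equiv 2 (Fin d → ℝ)).symm 1 ∈ latticeSet d α q := by
  refine mem_latticeSet_iff.mpr fun i => ⟨fun _ => q i, fun _ => le_rfl, ?_⟩
  have hpt : latticePoint (q i) (fun _ => q i) = (WithLp.equiv 2 (Fin d → ℝ)).symm 1 := by
    ext j
    simp [latticePoint, (hq i).ne']
  simpa [hpt] using latticeRadius_pos (hq i)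

lemma isBounded_latticeSet : Bornology.IsBounded (latticeSet d α q) :=
  ((Bornology.isBounded_biUnion (Set.Finite.pi' fun _ => Set.finite_Iic (q 0))).mpr
    fun _ _ => isBounded_ball).subset (Set.iInter_subset _ 0)

lemma one_le_diam_latticeSet (hd : 0 < d) (hq : ∀ i, 0 < q i) :
    1 ≤ diam (latticeSet d α q) :=
  calc (1 : ℝ) = dist ((WithLp.equiv 2 (Fin d → ℝ)).symm 1 ⟨0, hd⟩)
        ((0 : EuclideanSpace ℝ (Fin d)) ⟨0, hd⟩) := by simp
    _ ≤ dist ((WithLp.equiv 2 (Fin d → ℝ)).symm 1) 0 := PiLp.dist_apply_le _ _ _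
    _ ≤ diam (latticeSet d α q) :=
      dist_le_diam_of_mem isBounded_latticeSet (one_mem_latticeSet hq) (zero_mem_latticeSet hq)

lemma ball_zero_inter_latticeSet_subset {k : ℕ} (hk : 0 < q k) (r : ℝ) :
    ball 0 r ∩ latticeSet d α q ⊆
      ⋃ v ∈ Fintype.piFinset fun _ => range (⌊q k * (r + latticeRadius d α (q k))⌋₊ + 1),
        ball (latticePoint (q k) v) (latticeRadius d α (q k)) := by
  rintro y ⟨hy0, hyE⟩
  obtain ⟨v, -, hyv⟩ := mem_latticeSet_iff.mp hyE k
  refine Set.mem_biUnion (Fintype.mem_piFinset.mpr fun j => ?_) (mem_ball.mpr hyv)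
  rw [mem_range, Nat.lt_succ_iff]
  apply Nat.le_floor
  have hcoord : (v j : ℝ) / q k < r + latticeRadius d α (q k) :=
    calc (v j : ℝ) / q k
          = dist (latticePoint (q k) v j) ((0 : EuclideanSpace ℝ (Fin d)) j) := by
          simp [latticePoint]
      _ ≤ dist (latticePoint (q k) v) 0 := PiLp.dist_apply_le _ _ _
      _ ≤ dist (latticePoint (q k) v) y + dist y 0 := dist_triangle _ _ _
      _ < r + latticeRadius d α (q k) := by
          rw [dist_comm]
          linarith [mem_ball.mp hy0]
  rw [div_lt_iff₀ (Nat.cast_pos.mpr hk)] at hcoord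
  linarith

end LatticeSet

section Regularity

variable {d : ℕ} {α : ℝ} {q : ℕ → ℕ} {μ : Measure (EuclideanSpace ℝ (Fin d))}
  {c C : ℝ}

lemma IsAhlforsDavidRegularOn.le_mul_latticeRadius_pow (hα : 0 < α) (hαd : α < d)
    (hq : ∀ i, 2 ≤ q i) (hμ : IsAhlforsDavidRegularOn μ (latticeSet d α q) α c C)
    (hE : μ (latticeSet d α q)ᶜ = 0) (hc : 0 < c) (hC : 0 ≤ C) {i : ℕ}
    (hle : q i ≤ q (i + 1))
    (hnext : 1 ≤ (q (i + 1) : ℝ) * latticeRadius d α (q i)) :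
    c ≤ C * 2 ^ α * (3 * (q i * latticeRadius d α (q i))) ^ d := by
  set ρ := latticeRadius d α (q i)
  set ρ' := latticeRadius d α (q (i + 1))
  set m := ⌊(q (i + 1) : ℝ) * (ρ + ρ')⌋₊
  have hq0 : ∀ i, 0 < q i := fun i => two_pos.trans_le (hq i)
  have hQ : (0 : ℝ) < q i := Nat.cast_pos.mpr (hq0 i)
  have hQ' : (0 : ℝ) < q (i + 1) := Nat.cast_pos.mpr (hq0 (i + 1))
  have hdiam := one_le_diam_latticeSet (α := α) (Nat.cast_pos.mp (hα.trans hαd)) hq0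
  have hρ : 0 < ρ := latticeRadius_pos (hq0 i)
  have hρ' : 0 < ρ' := latticeRadius_pos (hq0 (i + 1))
  have hρ'ρ : ρ' ≤ ρ := latticeRadius_anti hα (hq0 i) hle
  have hmass : ENNReal.ofReal (c * ρ ^ α) ≤
      ((m + 1) ^ d : ℕ) • ENNReal.ofReal (C * (2 * ρ') ^ α) :=
    calc ENNReal.ofReal (c * ρ ^ α) ≤ μ (ball 0 ρ) :=
          (hμ 0 (zero_mem_latticeSet hq0) ρ hρ
            (by linarith [two_mul_latticeRadius_lt_one hα hαd (hq i)])).1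
      _ ≤ ((m + 1) ^ d : ℕ) • ENNReal.ofReal (C * (2 * ρ') ^ α) := by
          simpa using hμ.measure_le_card_nsmul hE _ _ hρ'
            (by linarith [two_mul_latticeRadius_lt_one hα hαd (hq (i + 1))])
            (ball_zero_inter_latticeSet_subset (hq0 (i + 1)) ρ)
  have hreal : c * ρ ^ α ≤ ((m : ℝ) + 1) ^ d * (C * (2 * ρ') ^ α) := by
    rw [nsmul_eq_mul, ← ENNReal.ofReal_natCast, ← ENNReal.ofReal_mul (Nat.cast_nonneg _),
      ENNReal.ofReal_le_ofReal_iff'] at hmass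
    push_cast at hmass
    exact hmass.resolve_right (by positivity : 0 < c * ρ ^ α).not_ge
  -- `hnext` absorbs the `+ 1` of the grid count, and `R_{i+1} ≤ R_i` the second radius.
  have hcount : (m : ℝ) + 1 ≤ 3 * q (i + 1) * ρ := by
    have hfloor := Nat.floor_le (a := (q (i + 1) : ℝ) * (ρ + ρ')) (by positivity)
    nlinarith [mul_le_mul_of_nonneg_left hρ'ρ hQ'.le]
  have hcancel : ∀ {x : ℝ}, 0 < x → x ^ d * x⁻¹ ^ d = 1 := fun hx => by
    rw [← mul_pow, mul_inv_cancel₀ hx.ne', one_pow]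
  have hscaled : c * ((q i : ℝ)⁻¹) ^ d ≤ C * 2 ^ α * (3 * ρ) ^ d :=
    calc c * ((q i : ℝ)⁻¹) ^ d = c * ρ ^ α := by rw [latticeRadius_rpow hα.ne']
      _ ≤ ((m : ℝ) + 1) ^ d * (C * (2 * ρ') ^ α) := hreal
      _ ≤ (3 * q (i + 1) * ρ) ^ d * (C * (2 ^ α * ((q (i + 1) : ℝ)⁻¹) ^ d)) := by
          rw [Real.mul_rpow zero_le_two hρ'.le, latticeRadius_rpow hα.ne']
          gcongr
      _ = (q (i + 1) : ℝ) ^ d * ((q (i + 1) : ℝ)⁻¹) ^ d * (C * 2 ^ α * (3 * ρ) ^ d) := by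
          ring
      _ = C * 2 ^ α * (3 * ρ) ^ d := by rw [hcancel hQ', one_mul]
  calc c = c * ((q i : ℝ) ^ d * ((q i : ℝ)⁻¹) ^ d) := by rw [hcancel hQ, mul_one]
    _ = c * ((q i : ℝ)⁻¹) ^ d * (q i : ℝ) ^ d := by ring
    _ ≤ C * 2 ^ α * (3 * ρ) ^ d * (q i : ℝ) ^ d := by gcongr
    _ = C * 2 ^ α * (3 * (q i * ρ)) ^ d := by ring

end Regularity

lemma tendsto_atTop_of_eq_pow {q : ℕ → ℕ} (hq : ∀ i, 2 ≤ q i)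
    (hgrow : ∀ i, 1 ≤ i → q (i + 1) = q i ^ i) : Tendsto q atTop atTop := by
  refine tendsto_atTop_mono' atTop ?_ tendsto_id
  filter_upwards [eventually_ge_atTop 2] with n hn
  obtain ⟨i, rfl⟩ : ∃ i, n = i + 1 := ⟨n - 1, by omega⟩
  rw [hgrow i (by omega)]
  calc i + 1 ≤ 2 ^ i := Nat.lt_two_pow_self
    _ ≤ q i ^ i := Nat.pow_le_pow_left (hq i) i

theorem stmt_5_general (d : ℕ) (α : ℝ) (hα : 0 < α) (hαd : α < d)
    (q : ℕ → ℕ) (hq : ∀ i, 2 ≤ q i) (hgrow : ∀ i, 1 ≤ i → q (i + 1) = q i ^ i) :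
    ¬ ∃ (μ : Measure (EuclideanSpace ℝ (Fin d))) (c C : ℝ), 0 < c ∧ c < C ∧
      IsProbabilityMeasure μ ∧ μ (latticeSet d α q)ᶜ = 0 ∧
      ∀ x ∈ latticeSet d α q, ∀ r : ℝ, 0 < r → r < Metric.diam (latticeSet d α q) →
        ENNReal.ofReal (c * r ^ α) ≤ μ (Metric.ball x r) ∧
        μ (Metric.ball x r) ≤ ENNReal.ofReal (C * r ^ α) := by
  rintro ⟨μ, c, C, hc, hcC, -, hE, hμ⟩
  have hq0 : ∀ i, 0 < q i := fun i => two_pos.trans_le (hq i)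
  have hd : d ≠ 0 := by rintro rfl; simp at hαd; linarith
  have hqρ : Tendsto (fun i => (q i : ℝ) * latticeRadius d α (q i)) atTop (𝓝 0) :=
    ((tendsto_rpow_neg_atTop (by rwa [sub_pos, one_lt_div hα])).comp
      (tendsto_natCast_atTop_atTop.comp (tendsto_atTop_of_eq_pow hq hgrow))).congr
      fun i => (natCast_mul_latticeRadius (hq0 i)).symm
  have hbound : Tendsto (fun i => C * 2 ^ α * (3 * (q i * latticeRadius d α (q i))) ^ d)
      atTop (𝓝 0) := by
    simpa [hd] using ((hqρ.const_mul 3).pow d).const_mul (C * 2 ^ α)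
  obtain ⟨i, hi_small, hi_large⟩ := ((hbound.eventually (gt_mem_nhds hc)).and
    (eventually_ge_atTop (⌈(d : ℝ) / α⌉₊ + 1))).exists
  have hi : 1 ≤ i := by omega
  refine (hi_small.trans_le ?_).false
  refine IsAhlforsDavidRegularOn.le_mul_latticeRadius_pow hα hαd hq hμ hE hc (hc.trans hcC).le
    (by rw [hgrow i hi]; exact Nat.le_self_pow (by omega) _) ?_
  rw [hgrow i hi]
  exact one_le_pow_mul_latticeRadius (hq0 i) ((Nat.le_ceil _).trans (by exact_mod_cast by omega))

/-- The fractal lattice set of dimension `α < d` is not Ahlfors–David regular: it supports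
no Borel probability measure `μ` with `c·r^α ≤ μ(B(x,r)) ≤ C·r^α` for all `x ∈ E` and
`0 < r < diam E`. -/
theorem stmt_5 (d : ℕ) (hd : 1 ≤ d) (α : ℝ) (hα : 0 < α) (hαd : α < d)
    (q : ℕ → ℕ) (hq : ∀ i, 2 ≤ q i) (hgrow : ∀ i, 1 ≤ i → q (i + 1) = q i ^ i) :
    ¬ ∃ (μ : Measure (EuclideanSpace ℝ (Fin d))) (c C : ℝ), 0 < c ∧ c < C ∧
      IsProbabilityMeasure μ ∧ μ (latticeSet d α q)ᶜ = 0 ∧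
      ∀ x ∈ latticeSet d α q, ∀ r : ℝ, 0 < r → r < Metric.diam (latticeSet d α q) →
        ENNReal.ofReal (c * r ^ α) ≤ μ (Metric.ball x r) ∧
        μ (Metric.ball x r) ≤ ENNReal.ofReal (C * r ^ α) :=
  stmt_5_general d α hα hαd q hq hgrow
end

section
/- For every δ > 0, r ≥ δ, and f ∈ L^2(E_δ), where E ⊂ ℝ^d is {δ_i}-discrete α-regular with δ = δ_i and E is contained in the unit ball, the following interpolation bound holds for all small ε > 0: ‖(f·χ_{E_δ}) ∗ χ_{B(0,r)}‖_{L^2(ℝ^d)} ≲_ε r^{(d+α+ε)/2} δ^{(d−α)/2 − ε} ‖f‖_{L^2(E_δ)}. -/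
open MeasureTheory ENNReal

/-- `E ⊂ ℝ^d` is `{δ_i}`-discrete `α`-regular. -/
def DiscreteRegular (d : ℕ) (α : ℝ) (E : Set (EuclideanSpace ℝ (Fin d))) (δ : ℕ → ℝ) : Prop :=
  (∀ i, 0 < δ i) ∧ Filter.Tendsto δ Filter.atTop (nhds 0) ∧
  ∃ ε₀ : ℝ, 0 < ε₀ ∧ ∀ ε : ℝ, 0 < ε → ε < ε₀ → ∃ K : ℝ, 0 < K ∧
    ∀ (i : ℕ) (x : EuclideanSpace ℝ (Fin d)) (r : ℝ), δ i ≤ r →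
      volume (Metric.cthickening (δ i) E ∩ Metric.ball x r) ≤
        ENNReal.ofReal (K * (r / δ i) ^ (α + ε) * δ i ^ ((d : ℝ) - ε))

open Metric Function

/-! The paper's Riesz–Thorin interpolation between the `L¹` and `L^∞` bounds is, for a positive
kernel, the Schur test: if `∫ k(x, y) dy ≤ A` for all `x` and `∫ k(x, y) dx ≤ B` for all `y`, then
`H ↦ ∫ k(·, y) H(y) dy` has norm at most `√(AB)` on `L²`. The convolution
`(f χ_{E_δ}) ∗ χ_{B(0,r)}` is dominated by the kernel `k(x, y) = χ_{E_δ ∩ B(x,r)}(y)`, whose row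
integrals `|E_δ ∩ B(x,r)|` are controlled by regularity and whose column integrals are at most
`|B(0,r)| = c r^d`. -/

theorem lintegral_rpow_two_le_measure_univ_mul {X : Type*} [MeasurableSpace X] (ν : Measure X)
    {H : X → ℝ≥0∞} (hH : AEMeasurable H ν) :
    (∫⁻ x, H x ∂ν) ^ (2 : ℝ) ≤ ν Set.univ * ∫⁻ x, H x ^ (2 : ℝ) ∂ν := by
  have hCS := ENNReal.lintegral_mul_le_Lp_mul_Lq ν Real.HolderConjugate.two_two
    aemeasurable_const hH (f := fun _ => 1)
  simp only [Pi.mul_apply, one_mul, one_rpow, lintegral_const] at hCS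
  calc (∫⁻ x, H x ∂ν) ^ (2 : ℝ)
      ≤ ((ν Set.univ) ^ (1 / 2 : ℝ) * (∫⁻ x, H x ^ (2 : ℝ) ∂ν) ^ (1 / 2 : ℝ)) ^ (2 : ℝ) := by
        gcongr
    _ = ν Set.univ * ∫⁻ x, H x ^ (2 : ℝ) ∂ν := by
        rw [mul_rpow_of_nonneg _ _ zero_le_two, ← rpow_mul, ← rpow_mul]
        norm_num

theorem lintegral_schur_test {X Y : Type*} [MeasurableSpace X] [MeasurableSpace Y]
    (μ : Measure X) (ν : Measure Y) [SFinite μ] [SFinite ν]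
    {k : X → Y → ℝ≥0∞} (hk : Measurable (uncurry k)) {H : Y → ℝ≥0∞} (hH : Measurable H)
    {A B : ℝ≥0∞} (hA : ∀ x, ∫⁻ y, k x y ∂ν ≤ A) (hB : ∀ y, ∫⁻ x, k x y ∂μ ≤ B) :
    ∫⁻ x, (∫⁻ y, k x y * H y ∂ν) ^ (2 : ℝ) ∂μ ≤ A * B * ∫⁻ y, H y ^ (2 : ℝ) ∂ν := by
  have hkH : Measurable fun p : X × Y => k p.1 p.2 * H p.2 ^ (2 : ℝ) :=
    hk.mul ((hH.comp measurable_snd).pow_const _)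
  -- Cauchy–Schwarz for the measure `k x y dν(y)`.
  have hCS : ∀ x, (∫⁻ y, k x y * H y ∂ν) ^ (2 : ℝ) ≤ A * ∫⁻ y, k x y * H y ^ (2 : ℝ) ∂ν := by
    intro x
    have hkx : Measurable (k x) := hk.of_uncurry_left
    have := lintegral_rpow_two_le_measure_univ_mul (ν.withDensity (k x)) hH.aemeasurable
    rw [withDensity_apply _ MeasurableSet.univ, Measure.restrict_univ,
      lintegral_withDensity_eq_lintegral_mul _ hkx hH,
      lintegral_withDensity_eq_lintegral_mul _ hkx (hH.pow_const _)] at this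
    exact this.trans (mul_le_mul_left (hA x) _)
  calc ∫⁻ x, (∫⁻ y, k x y * H y ∂ν) ^ (2 : ℝ) ∂μ
      ≤ ∫⁻ x, A * ∫⁻ y, k x y * H y ^ (2 : ℝ) ∂ν ∂μ := lintegral_mono hCS
    _ = A * ∫⁻ y, (∫⁻ x, k x y ∂μ) * H y ^ (2 : ℝ) ∂ν := by
        rw [lintegral_const_mul _ hkH.lintegral_prod_right,
          lintegral_lintegral_swap hkH.aemeasurable]
        congr 1
        refine lintegral_congr fun y => ?_
        exact lintegral_mul_const _ hk.of_uncurry_right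
    _ ≤ A * ∫⁻ y, B * H y ^ (2 : ℝ) ∂ν := by gcongr with y; exact hB y
    _ = A * B * ∫⁻ y, H y ^ (2 : ℝ) ∂ν := by
        rw [lintegral_const_mul _ (hH.pow_const _), mul_assoc]

theorem eLpNorm_two_rpow_two {X E : Type*} [MeasurableSpace X] (μ : Measure X)
    [NormedAddCommGroup E] (f : X → E) :
    eLpNorm f 2 μ ^ (2 : ℝ) = ∫⁻ x, ‖f x‖ₑ ^ (2 : ℝ) ∂μ := by
  simpa using eLpNorm_nnreal_pow_eq_lintegral (f := f) (μ := μ) (p := 2) two_ne_zero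

theorem eLpNorm_two_le_of_lintegral_rpow_two_le {X E F : Type*} [MeasurableSpace X]
    {μ : Measure X} [NormedAddCommGroup E] [NormedAddCommGroup F] {f : X → E} {g : X → F}
    {C : ℝ≥0∞} (h : ∫⁻ x, ‖f x‖ₑ ^ (2 : ℝ) ∂μ ≤ C * ∫⁻ x, ‖g x‖ₑ ^ (2 : ℝ) ∂μ) :
    eLpNorm f 2 μ ≤ C ^ (1 / 2 : ℝ) * eLpNorm g 2 μ := by
  rwa [← ENNReal.rpow_le_rpow_iff zero_lt_two, mul_rpow_of_nonneg _ _ zero_le_two, ← rpow_mul,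
    eLpNorm_two_rpow_two, eLpNorm_two_rpow_two, one_div, inv_mul_cancel₀ two_ne_zero, rpow_one]

theorem enorm_integral_indicator_mul_ball_le {G : Type*} [NormedAddCommGroup G]
    [MeasurableSpace G] (μ : Measure G) (S : Set G) (f : G → ℝ) (r : ℝ) (x : G) :
    ‖∫ y, S.indicator f y * (ball (0 : G) r).indicator (fun _ => (1 : ℝ)) (x - y) ∂μ‖ₑ ≤
      ∫⁻ y, (S ∩ ball x r).indicator 1 y * ‖S.indicator f y‖ₑ ∂μ := by
  refine (enorm_integral_le_lintegral_enorm _).trans_eq (lintegral_congr fun y => ?_)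
  have hball : x - y ∈ ball (0 : G) r ↔ y ∈ ball x r := by
    rw [mem_ball_zero_iff, mem_ball, dist_eq_norm, norm_sub_rev]
  by_cases hy : y ∈ S <;> by_cases hyx : y ∈ ball x r <;>
    simp [hy, hyx, hball]

theorem eLpNorm_integral_indicator_mul_ball_le {G : Type*} [NormedAddCommGroup G]
    [MeasurableSpace G] [BorelSpace G] [SecondCountableTopology G]
    (μ : Measure G) [μ.IsAddLeftInvariant] [SFinite μ] {S : Set G} (hS : MeasurableSet S)
    {f : G → ℝ} (hf : Measurable f) {r : ℝ} {A : ℝ≥0∞} (hA : ∀ x, μ (S ∩ ball x r) ≤ A) :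
    eLpNorm (fun x => ∫ y, S.indicator f y *
        (ball (0 : G) r).indicator (fun _ => (1 : ℝ)) (x - y) ∂μ) 2 μ ≤
      (A * μ (ball 0 r)) ^ (1 / 2 : ℝ) * eLpNorm (S.indicator f) 2 μ := by
  set k : G → G → ℝ≥0∞ := fun x y => (S ∩ ball x r).indicator 1 y
  have hk : Measurable (uncurry k) := by
    have : MeasurableSet {p : G × G | p.2 ∈ S ∧ dist p.2 p.1 < r} :=
      (hS.preimage measurable_snd).inter
        (measurableSet_lt (measurable_snd.dist measurable_fst) measurable_const)
    exact measurable_one.indicator this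
  have hkA : ∀ x, ∫⁻ y, k x y ∂μ ≤ A := fun x =>
    (lintegral_indicator_one (hS.inter measurableSet_ball)).trans_le (hA x)
  have hkB : ∀ y, ∫⁻ x, k x y ∂μ ≤ μ (ball 0 r) := fun y => calc
    ∫⁻ x, k x y ∂μ ≤ ∫⁻ x, (ball y r).indicator 1 x ∂μ := by
        refine lintegral_mono fun x => ?_
        by_cases h : y ∈ S ∩ ball x r
        · simp [k, h, mem_ball_comm.mp h.2]
        · simp [k, h]
    _ = μ (ball 0 r) := by
        rw [lintegral_indicator_one measurableSet_ball, ← measure_preimage_add μ y,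
          preimage_add_ball, sub_self]
  have hH : Measurable fun y => ‖S.indicator f y‖ₑ := (hf.indicator hS).enorm
  refine eLpNorm_two_le_of_lintegral_rpow_two_le ?_
  calc _ ≤ ∫⁻ x, (∫⁻ y, k x y * ‖S.indicator f y‖ₑ ∂μ) ^ (2 : ℝ) ∂μ := by
        gcongr with x; exact enorm_integral_indicator_mul_ball_le μ S f r x
    _ ≤ A * μ (ball 0 r) * ∫⁻ y, ‖S.indicator f y‖ₑ ^ (2 : ℝ) ∂μ :=
        lintegral_schur_test μ μ hk hH hkA hkB

-- `A · |B(0,r)|`, with `A` the regularity bound on `|E_δ ∩ B(x,r)|` and `|B(0,r)| = r^d c`.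
theorem rpow_half_regularity_mul_ball_eq {K c r δ α ε : ℝ} (d : ℕ) (hKc : 0 ≤ K * c)
    (hr : 0 < r) (hδ : 0 < δ) :
    (K * (r / δ) ^ (α + ε) * δ ^ ((d : ℝ) - ε) * (r ^ d * c)) ^ (1 / 2 : ℝ) =
      √(K * c) * r ^ (((d : ℝ) + α + ε) / 2) * δ ^ (((d : ℝ) - α) / 2 - ε) := by
  have hsplit : K * (r / δ) ^ (α + ε) * δ ^ ((d : ℝ) - ε) * (r ^ d * c) =
      K * c * r ^ ((d : ℝ) + α + ε) * δ ^ ((d : ℝ) - α - 2 * ε) := by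
    rw [Real.div_rpow hr.le hδ.le, ← Real.rpow_natCast, add_assoc,
      Real.rpow_add hr (d : ℝ) (α + ε), show (d : ℝ) - α - 2 * ε = (d - ε) - (α + ε) by ring,
      Real.rpow_sub hδ ((d : ℝ) - ε) (α + ε)]
    ring
  rw [hsplit, Real.mul_rpow (by positivity) (by positivity), Real.mul_rpow hKc (by positivity),
    ← Real.rpow_mul hr.le, ← Real.rpow_mul hδ.le, ← Real.sqrt_eq_rpow]
  ring_nf

theorem stmt_9_general (d : ℕ) (α : ℝ)
    (E : Set (EuclideanSpace ℝ (Fin d)))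
    (δseq : ℕ → ℝ) (hreg : DiscreteRegular d α E δseq) :
    ∃ ε₀ : ℝ, 0 < ε₀ ∧ ∀ ε : ℝ, 0 < ε → ε < ε₀ → ∃ K : ℝ, 0 < K ∧
      ∀ (i : ℕ) (r : ℝ), δseq i ≤ r →
      ∀ f : EuclideanSpace ℝ (Fin d) → ℝ, Measurable f →
        eLpNorm (fun x => ∫ y, (Metric.cthickening (δseq i) E).indicator f y *
            (Metric.ball (0 : EuclideanSpace ℝ (Fin d)) r).indicator
              (fun _ => (1 : ℝ)) (x - y)) 2 volume ≤
          ENNReal.ofReal (K * r ^ (((d : ℝ) + α + ε) / 2) *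
              δseq i ^ (((d : ℝ) - α) / 2 - ε)) *
            eLpNorm ((Metric.cthickening (δseq i) E).indicator f) 2 volume := by
  obtain ⟨hδpos, -, ε₀, hε₀, hregε⟩ := hreg
  refine ⟨ε₀, hε₀, fun ε hε hεε₀ => ?_⟩
  obtain ⟨K, hK, hvol⟩ := hregε ε hε hεε₀
  set c := volume.real (ball (0 : EuclideanSpace ℝ (Fin d)) 1)
  have hc : 0 < c := toReal_pos (measure_ball_pos volume 0 one_pos).ne' measure_ball_lt_top.ne
  refine ⟨√(K * c), Real.sqrt_pos.mpr (mul_pos hK hc), fun i r hr f hf => ?_⟩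
  have hδ : 0 < δseq i := hδpos i
  have hr₀ : 0 < r := hδ.trans_le hr
  refine (eLpNorm_integral_indicator_mul_ball_le volume isClosed_cthickening.measurableSet hf
    (hvol i · r hr)).trans_eq ?_
  rw [Measure.addHaar_ball_of_pos _ _ hr₀, finrank_euclideanSpace_fin, ← ofReal_measureReal,
    ← ofReal_mul (by positivity), ← ofReal_mul (by positivity),
    ofReal_rpow_of_nonneg (by positivity) (by norm_num),
    rpow_half_regularity_mul_ball_eq d (mul_pos hK hc).le hr₀ hδ]

/-- Interpolation bound: for `E ⊂ ℝ^d` `{δ_i}`-discrete `α`-regular in the unit ball,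
`δ = δ_i`, `r ≥ δ` and `f ∈ L²(E_δ)`, for all small `ε > 0`,
`‖(f·χ_{E_δ}) ∗ χ_{B(0,r)}‖_{L²} ≲_ε r^{(d+α+ε)/2} δ^{(d-α)/2-ε} ‖f‖_{L²(E_δ)}`. -/
theorem stmt_9 (d : ℕ) (hd : 1 ≤ d) (α : ℝ) (hα : 0 < α)
    (E : Set (EuclideanSpace ℝ (Fin d))) (hE : IsCompact E)
    (hEball : E ⊆ Metric.closedBall 0 1)
    (δseq : ℕ → ℝ) (hreg : DiscreteRegular d α E δseq) :
    ∃ ε₀ : ℝ, 0 < ε₀ ∧ ∀ ε : ℝ, 0 < ε → ε < ε₀ → ∃ K : ℝ, 0 < K ∧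
      ∀ (i : ℕ) (r : ℝ), δseq i ≤ r →
      ∀ f : EuclideanSpace ℝ (Fin d) → ℝ, Measurable f →
        eLpNorm (fun x => ∫ y, (Metric.cthickening (δseq i) E).indicator f y *
            (Metric.ball (0 : EuclideanSpace ℝ (Fin d)) r).indicator
              (fun _ => (1 : ℝ)) (x - y)) 2 volume ≤
          ENNReal.ofReal (K * r ^ (((d : ℝ) + α + ε) / 2) *
              δseq i ^ (((d : ℝ) - α) / 2 - ε)) *
            eLpNorm ((Metric.cthickening (δseq i) E).indicator f) 2 volume :=
  stmt_9_general d α E δseq hreg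
end

section
/- Let E ⊂ ℝ^d be compact with Frostman measure μ. Suppose E_1, E_2 ⊂ E are disjoint with μ(E_i) > 0, there exists x ∈ E_1 with dim_H({(|x−y_1|, |y_1−y_2|, |y_2−x|) : y_1, y_2 ∈ E_1, x, y_1, y_2 distinct}) ≥ γ_1 > 0, and for every y_1 ∈ E_1, dim_H({(|y_1−y_3|, |y_3−y_4|) : y_3, y_4 ∈ E_2 distinct}) ≥ γ_2 > 0. Then there exists x ∈ E such that the 'kite' edge-length set {(|x−y_1|, |y_1−y_2|, |y_2−x|, |y_1−y_3|, |y_3−y_4|) : y_1, y_2, y_3, y_4 ∈ E, all points distinct} ⊂ ℝ^5 has Hausdorff dimension at least γ_1 + γ_2. -/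
/-!
Splitting the five kite edge lengths into the triangle's three and the chain's two is Lipschitz and
maps the kite edge-length set onto a set `S ⊆ ℝ³ × ℝ²` whose slice over each point of the pinned
triangle set contains a pinned 2-chain set. So everything reduces to the slicing inequality
`dim S ≥ dim B + inf_{b ∈ B} dim S_b`, which holds for arbitrary sets.

To prove it, take `s + ε < dim B` and `t < dim S_b`. The slices then have infinite `t`-dimensional
Hausdorff measure, so `B` is a countable union of pieces on which every cover of the slice at a
fixed scale has `t`-cost at least one, and some piece `G` has positive `(s + ε)`-measure. Given a
cover of `S` by sets `U i` of diameter `≤ 2⁻ᵏ⁽ⁱ⁾`, cut each `U i` along the at most `3 ^ m` dyadic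
cubes of side `2⁻ᵏ⁽ⁱ⁾` of the base that it meets. Over each `b ∈ G` the cut pieces cover the
slice, so `∑ₖ 2⁻ᵏᵗ Nₖ(b) ≥ 1`, where `Nₖ(b)` counts the pieces of scale `k` above `b`; pigeonholing
against weights proportional to `2⁻ᵏᵋ` puts `b` in a cube above which many pieces lie. Covering
`G` by these cubes bounds its `(s + ε)`-cost by a constant times the `(s + t)`-cost of the cover of
`S`, so `H^{s+t}(S) = 0` would force `H^{s+ε}(G) = 0`.
-/

open MeasureTheory ENNReal

open Set Filter Metric Topology
open scoped NNReal

section Dyadic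

variable {m : ℕ}

noncomputable def dyadicIndex (k : ℕ) (x : Fin m → ℝ) : Fin m → ℤ := fun c => ⌊x c * 2 ^ k⌋

lemma ofReal_inv_two_pow (k : ℕ) : ENNReal.ofReal ((2⁻¹ : ℝ) ^ k) = 2⁻¹ ^ k := by
  rw [ENNReal.ofReal_pow (by norm_num), ENNReal.ofReal_inv_of_pos two_pos, ENNReal.ofReal_ofNat]

lemma abs_sub_le_inv_two_pow_iff {a b : ℝ} {k : ℕ} :
    |a - b| ≤ 2⁻¹ ^ k ↔ |a * 2 ^ k - b * 2 ^ k| ≤ 1 := by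
  rw [← sub_mul, abs_mul, abs_of_pos (by positivity : (0 : ℝ) < 2 ^ k), inv_pow,
    ← one_div, le_div_iff₀ (by positivity)]

lemma ediam_preimage_dyadicIndex_le (k : ℕ) (z : Fin m → ℤ) :
    ediam (dyadicIndex k ⁻¹' {z}) ≤ 2⁻¹ ^ k := by
  refine ediam_le fun x hx y hy => ?_
  have hxy : dyadicIndex k x = dyadicIndex k y := hx.trans hy.symm
  rw [edist_dist, ← ofReal_inv_two_pow]
  refine ENNReal.ofReal_le_ofReal ((dist_pi_le_iff (by positivity)).2 fun c => ?_)
  rw [Real.dist_eq, abs_sub_le_inv_two_pow_iff]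
  exact (Int.abs_sub_lt_one_of_floor_eq_floor (congrFun hxy c)).le

lemma floor_sub_floor_mem_Icc {a b : ℝ} (h : |a - b| ≤ 1) : ⌊a⌋ - ⌊b⌋ ∈ Icc (-1 : ℤ) 1 := by
  rw [abs_le] at h
  have h₁ : ⌊a⌋ ≤ ⌊b⌋ + 1 := by rw [← Int.floor_add_one]; exact Int.floor_mono (by linarith)
  have h₂ : ⌊b⌋ ≤ ⌊a⌋ + 1 := by rw [← Int.floor_add_one]; exact Int.floor_mono (by linarith)
  constructor <;> omega

/-- `A` meets at most `3 ^ m` dyadic cubes of side `2⁻ᵏ`. -/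
lemma exists_dyadicIndex_eq_of_ediam_le {k : ℕ} {A : Set (Fin m → ℝ)} (hA : ediam A ≤ 2⁻¹ ^ k) :
    ∃ z₀ : Fin m → ℤ, ∀ x ∈ A, ∃ e : Fin m → Fin 3,
      dyadicIndex k x = z₀ + fun c => (e c : ℤ) - 1 := by
  rcases A.eq_empty_or_nonempty with rfl | ⟨y, hy⟩
  · exact ⟨0, by simp⟩
  refine ⟨dyadicIndex k y, fun x hx => ?_⟩
  have hxy : dist x y ≤ 2⁻¹ ^ k := by
    rw [← ENNReal.ofReal_le_ofReal_iff (by positivity), ofReal_inv_two_pow, ← edist_dist]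
    exact edist_le_of_ediam_le hx hy hA
  have hc c : dyadicIndex k x c - dyadicIndex k y c ∈ Icc (-1) 1 :=
    floor_sub_floor_mem_Icc (abs_sub_le_inv_two_pow_iff.1 ((dist_le_pi_dist x y c).trans hxy))
  refine ⟨fun c => ⟨(dyadicIndex k x c - dyadicIndex k y c + 1).toNat, by
    obtain ⟨h₁, h₂⟩ := hc c; omega⟩, funext fun c => ?_⟩
  obtain ⟨h₁, h₂⟩ := hc c
  simp only [Pi.add_apply]
  omega

end Dyadic

noncomputable def fiberCount {α β : Type*} [DecidableEq β] (φ : α → β) (b : β) : ℝ≥0∞ :=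
  ∑' a, if φ a = b then 1 else 0

lemma tsum_mul_fiberCount {α β : Type*} [DecidableEq β] (φ : α → β) (f : β → ℝ≥0∞) :
    ∑' b, f b * fiberCount φ b = ∑' a, f (φ a) := by
  simp_rw [fiberCount, ← ENNReal.tsum_mul_left, mul_ite, mul_one, mul_zero]
  rw [ENNReal.tsum_comm]
  exact tsum_congr fun a =>
    (tsum_eq_single (φ a) fun b hb => if_neg (Ne.symm hb)).trans (if_pos rfl)

lemma exists_le_two_mul_of_one_le_tsum {α : Type*} {θ a : α → ℝ≥0∞} (hθ : ∑' k, θ k ≤ 1)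
    (ha : 1 ≤ ∑' k, a k) : ∃ k, θ k ≤ 2 * a k := by
  by_contra! h
  have : (2 : ℝ≥0∞) ≤ 1 := calc
    2 ≤ 2 * ∑' k, a k := by simpa using mul_le_mul_right ha 2
    _ = ∑' k, 2 * a k := ENNReal.tsum_mul_left.symm
    _ ≤ ∑' k, θ k := ENNReal.tsum_le_tsum fun k => (h k).le
    _ ≤ 1 := hθ
  norm_num at this

lemma tsum_inv_two_pow_rpow_ne_top {ε : ℝ} (hε : 0 < ε) :
    ∑' k : ℕ, ((2⁻¹ : ℝ≥0∞) ^ k) ^ ε ≠ ⊤ := by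
  simp_rw [← ENNReal.rpow_natCast_mul, mul_comm _ ε, ENNReal.rpow_mul_natCast,
    ENNReal.tsum_geometric, ne_eq, ENNReal.inv_eq_top, tsub_eq_zero_iff_le, not_le]
  exact ENNReal.rpow_lt_one (by norm_num) hε

lemma exists_le_inv_two_pow_le_two_mul {a : ℝ≥0∞} (ha₀ : a ≠ 0) (ha₁ : a ≤ 1) :
    ∃ k : ℕ, a ≤ 2⁻¹ ^ k ∧ 2⁻¹ ^ k ≤ 2 * a := by
  classical
  have hex : ∃ n : ℕ, 2⁻¹ ^ n < a := ENNReal.exists_inv_two_pow_lt ha₀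
  have hn : Nat.find hex ≠ 0 := fun h => (Nat.find_spec hex).not_ge (by simpa [h] using ha₁)
  obtain ⟨k, hk⟩ := Nat.exists_eq_succ_of_ne_zero hn
  refine ⟨k, not_lt.1 (Nat.find_min hex (by omega)), ?_⟩
  calc (2⁻¹ : ℝ≥0∞) ^ k = 2 * 2⁻¹ ^ (k + 1) := by
        rw [pow_succ', ← mul_assoc, ENNReal.mul_inv_cancel two_ne_zero ofNat_ne_top, one_mul]
    _ ≤ 2 * a := by
        have := Nat.find_spec hex
        rw [hk] at this
        exact mul_le_mul_right this.le 2

lemma exists_le_inv_two_pow_and_rpow_le {p : ℝ} (hp : 0 < p) {a η : ℝ≥0∞} (ha : a ≤ 1)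
    (hη : 0 < η) : ∃ k : ℕ, a ≤ 2⁻¹ ^ k ∧ ((2⁻¹ : ℝ≥0∞) ^ k) ^ p ≤ 2 ^ p * a ^ p + η := by
  rcases eq_or_ne a 0 with rfl | ha₀
  · obtain ⟨k, hk⟩ :=
      ENNReal.exists_inv_two_pow_lt (ENNReal.rpow_pos_of_nonneg hη (inv_nonneg.2 hp.le)).ne'
    refine ⟨k, zero_le, ?_⟩
    rw [ENNReal.zero_rpow_of_pos hp, mul_zero, zero_add]
    exact ((ENNReal.lt_rpow_inv_iff hp).1 hk).le
  · obtain ⟨k, hak, hka⟩ := exists_le_inv_two_pow_le_two_mul ha₀ ha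
    refine ⟨k, hak, le_add_right ?_⟩
    rw [← ENNReal.mul_rpow_of_nonneg _ _ hp.le]
    exact ENNReal.rpow_le_rpow hka hp.le

section HausdorffMeasure

variable {X : Type*} [EMetricSpace X]

/-- `H^t_ρ(A) ≥ 1`, tested on covers indexed by `ι`. -/
def OneLeCoverSum (ι : Type*) (t : ℝ) (ρ : ℝ≥0∞) (A : Set X) : Prop :=
  ∀ W : ι → Set X, A ⊆ ⋃ i, W i → (∀ i, ediam (W i) ≤ ρ) → 1 ≤ ∑' i, ediam (W i) ^ t

variable [MeasurableSpace X] [BorelSpace X]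

lemma exists_oneLeCoverSum_of_one_lt_hausdorffMeasure (ι : Type*) [Countable ι] {t : ℝ}
    {A : Set X} (h : 1 < μH[t] A) : ∃ j : ℕ, OneLeCoverSum ι t (2⁻¹ ^ j) A := by
  by_contra! hA
  simp only [OneLeCoverSum, not_forall, not_le, exists_prop] at hA
  choose W hWA hWd hWs using hA
  refine h.not_ge ((Measure.hausdorffMeasure_le_liminf_tsum t A _
    (ENNReal.tendsto_pow_atTop_nhds_zero_of_lt_one (by norm_num)) W
    (.of_forall hWd) (.of_forall hWA)).trans ?_)
  exact liminf_le_of_frequently_le' (.of_forall fun j => (hWs j).le)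

lemma hausdorffMeasure_eq_zero_of_forall_exists_cover (ι : Type*) [Countable ι] {d : ℝ}
    (hd : 0 < d) {A : Set X}
    (h : ∀ c : ℝ≥0∞, 0 < c → ∃ T : ι → Set X, A ⊆ ⋃ i, T i ∧ ∑' i, ediam (T i) ^ d ≤ c) :
    μH[d] A = 0 := by
  choose T hTA hTs using fun n : ℕ => h (2⁻¹ ^ n) (ENNReal.pow_pos (by norm_num) n)
  have hdiam n i : ediam (T n i) ≤ ((2⁻¹ : ℝ≥0∞) ^ n) ^ d⁻¹ :=
    (ENNReal.le_rpow_inv_iff hd).2 ((ENNReal.le_tsum i).trans (hTs n))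
  have hlim : Tendsto (fun n : ℕ => (2⁻¹ : ℝ≥0∞) ^ n) atTop (𝓝 0) :=
    ENNReal.tendsto_pow_atTop_nhds_zero_of_lt_one (by norm_num)
  have hr : Tendsto (fun n : ℕ => ((2⁻¹ : ℝ≥0∞) ^ n) ^ d⁻¹) atTop (𝓝 0) := by
    simpa [Function.comp_def, ENNReal.zero_rpow_of_pos (inv_pos.2 hd)] using
      ((ENNReal.continuous_rpow_const (y := d⁻¹)).tendsto 0).comp hlim
  refine le_antisymm ?_ zero_le
  calc μH[d] A ≤ liminf (fun n => ∑' i, ediam (T n i) ^ d) atTop :=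
        Measure.hausdorffMeasure_le_liminf_tsum d A _ hr T (.of_forall hdiam) (.of_forall hTA)
    _ ≤ liminf (fun n : ℕ => (2⁻¹ : ℝ≥0∞) ^ n) atTop := liminf_le_liminf (.of_forall hTs)
    _ = 0 := hlim.liminf_eq

lemma exists_cover_tsum_lt_of_hausdorffMeasure_eq_zero {d : ℝ} (hd : 0 < d) {A : Set X}
    (h : μH[d] A = 0) {c : ℝ≥0∞} (hc : 0 < c) :
    ∃ U : ℕ → Set X, A ⊆ ⋃ i, U i ∧ (∀ i, ediam (U i) ≤ 1) ∧ ∑' i, ediam (U i) ^ d < c := by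
  rw [Measure.hausdorffMeasure_apply] at h
  simp only [ENNReal.iSup_eq_zero] at h
  have h₁ := (h 1 one_pos).trans_lt hc
  simp only [iInf_lt_iff] at h₁
  obtain ⟨U, hAU, hU, hsum⟩ := h₁
  refine ⟨U, hAU, hU, (tsum_congr fun i => ?_).trans_lt hsum⟩
  rcases (U i).eq_empty_or_nonempty with h | h
  · simp [h, ENNReal.zero_rpow_of_pos hd]
  · rw [iSup_pos h]

lemma exists_dyadic_cover_of_hausdorffMeasure_eq_zero {p : ℝ} (hp : 0 < p) {A : Set X}
    (h : μH[p] A = 0) {c : ℝ≥0∞} (hc : 0 < c) :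
    ∃ (U : ℕ → Set X) (κ : ℕ → ℕ), A ⊆ ⋃ i, U i ∧ (∀ i, ediam (U i) ≤ 2⁻¹ ^ κ i) ∧
      ∑' i, ((2⁻¹ : ℝ≥0∞) ^ κ i) ^ p ≤ c := by
  set c₁ := c / (2 ^ p + 1)
  have hc₁ : 0 < c₁ := ENNReal.div_pos hc.ne' (by simp [ENNReal.rpow_eq_top_iff, hp.not_gt])
  obtain ⟨U, hAU, hU₁, hsum⟩ := exists_cover_tsum_lt_of_hausdorffMeasure_eq_zero hp h hc₁
  obtain ⟨η, hη, hηsum⟩ := ENNReal.exists_pos_sum_of_countable hc₁.ne' ℕ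
  choose κ hUκ hκ using fun i =>
    exists_le_inv_two_pow_and_rpow_le hp (hU₁ i) (ENNReal.coe_pos.2 (hη i))
  refine ⟨U, κ, hAU, hUκ, ?_⟩
  calc ∑' i, ((2⁻¹ : ℝ≥0∞) ^ κ i) ^ p ≤ ∑' i, (2 ^ p * ediam (U i) ^ p + η i) :=
        ENNReal.tsum_le_tsum hκ
    _ = 2 ^ p * ∑' i, ediam (U i) ^ p + ∑' i, (η i : ℝ≥0∞) := by
        rw [ENNReal.tsum_add, ENNReal.tsum_mul_left]
    _ ≤ 2 ^ p * c₁ + c₁ := by gcongr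
    _ = (2 ^ p + 1) * c₁ := by ring
    _ ≤ c := ENNReal.mul_div_le

end HausdorffMeasure

section Slicing

variable {m : ℕ} {Y : Type*} [EMetricSpace Y]

lemma ediam_preimage_prodMk_le {X : Type*} [PseudoEMetricSpace X] (b : X) (U : Set (X × Y)) :
    ediam (Prod.mk b ⁻¹' U) ≤ ediam U :=
  ediam_le fun y hy y' hy' => by
    simpa [Prod.edist_eq] using edist_le_ediam_of_mem (show (b, y) ∈ U from hy) hy'

/-- Scale and index of the `e`-th of the `3 ^ m` dyadic cubes that the `i`-th covering set may
meet. -/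
def cubeLabel (κ : ℕ → ℕ) (z₀ : ℕ → Fin m → ℤ) (p : ℕ × (Fin m → Fin 3)) :
    ℕ × (Fin m → ℤ) :=
  (κ p.1, z₀ p.1 + fun c => (p.2 c : ℤ) - 1)

lemma one_le_tsum_fiberCount_cubeLabel {S : Set ((Fin m → ℝ) × Y)} {t : ℝ} (ht : 0 < t)
    {ρ : ℝ≥0∞} {U : ℕ → Set ((Fin m → ℝ) × Y)} {κ : ℕ → ℕ} {z₀ : ℕ → Fin m → ℤ}
    (hSU : S ⊆ ⋃ i, U i) (hU : ∀ i, ediam (U i) ≤ 2⁻¹ ^ κ i) (hκ : ∀ i, 2⁻¹ ^ κ i ≤ ρ)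
    (hz₀ : ∀ i, ∀ q ∈ U i, ∃ e : Fin m → Fin 3,
      dyadicIndex (κ i) q.1 = z₀ i + fun c => (e c : ℤ) - 1)
    {b : Fin m → ℝ} (hb : OneLeCoverSum (ℕ × (Fin m → Fin 3)) t ρ (Prod.mk b ⁻¹' S)) :
    1 ≤ ∑' k, ((2⁻¹ : ℝ≥0∞) ^ k) ^ t * fiberCount (cubeLabel κ z₀) (k, dyadicIndex k b) := by
  classical
  set φ := cubeLabel κ z₀
  let f : ℕ × (Fin m → ℤ) → ℝ≥0∞ := fun q =>
    if q.2 = dyadicIndex q.1 b then (2⁻¹ ^ q.1) ^ t else 0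
  let W : ℕ × (Fin m → Fin 3) → Set Y := fun p =>
    if (φ p).2 = dyadicIndex (φ p).1 b then Prod.mk b ⁻¹' U p.1 else ∅
  have hcover : Prod.mk b ⁻¹' S ⊆ ⋃ p, W p := by
    intro y hy
    obtain ⟨i, hi⟩ := mem_iUnion.1 (hSU hy)
    obtain ⟨e, he⟩ := hz₀ i _ hi
    exact mem_iUnion.2 ⟨(i, e), by simp [W, φ, cubeLabel, ← he, hi]⟩
  have hWdiam p : ediam (W p) ≤ 2⁻¹ ^ κ p.1 := by
    by_cases hp : (φ p).2 = dyadicIndex (φ p).1 b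
    · simpa only [W, if_pos hp] using (ediam_preimage_prodMk_le b _).trans (hU p.1)
    · simp [W, if_neg hp]
  have hW p : ediam (W p) ^ t ≤ f (φ p) := by
    by_cases hp : (φ p).2 = dyadicIndex (φ p).1 b
    · simp only [f, if_pos hp]
      exact ENNReal.rpow_le_rpow (hWdiam p) ht.le
    · simp [W, f, if_neg hp, ENNReal.zero_rpow_of_pos ht]
  calc 1 ≤ ∑' p, ediam (W p) ^ t := hb W hcover fun p => (hWdiam p).trans (hκ p.1)
    _ ≤ ∑' p, f (φ p) := ENNReal.tsum_le_tsum hW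
    _ = ∑' q, f q * fiberCount φ q := (tsum_mul_fiberCount φ f).symm
    _ = _ := by
      rw [ENNReal.tsum_prod']
      refine tsum_congr fun k => (tsum_eq_single (dyadicIndex k b) fun z hz => ?_).trans ?_
      · simp [f, hz]
      · simp [f]

lemma ediam_preimage_dyadicIndex_rpow_le {k : ℕ} (z : Fin m → ℤ) {s t ε : ℝ} (hsε : 0 ≤ s + ε)
    {Z N : ℝ≥0∞} (hZ₀ : Z ≠ 0) (hZ : Z ≠ ⊤)
    (h : ((2⁻¹ : ℝ≥0∞) ^ k) ^ ε / Z ≤ 2 * (((2⁻¹ : ℝ≥0∞) ^ k) ^ t * N)) :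
    ediam (dyadicIndex k ⁻¹' {z}) ^ (s + ε) ≤ 2 * Z * (((2⁻¹ : ℝ≥0∞) ^ k) ^ (s + t) * N) := by
  have h₀ : (2⁻¹ : ℝ≥0∞) ^ k ≠ 0 := by simp
  have h₁ : (2⁻¹ : ℝ≥0∞) ^ k ≠ ⊤ := by simp
  calc ediam (dyadicIndex k ⁻¹' {z}) ^ (s + ε)
      ≤ ((2⁻¹ : ℝ≥0∞) ^ k) ^ s * ((2⁻¹ : ℝ≥0∞) ^ k) ^ ε := by
        rw [← ENNReal.rpow_add _ _ h₀ h₁]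
        exact ENNReal.rpow_le_rpow (ediam_preimage_dyadicIndex_le _ _) hsε
    _ ≤ ((2⁻¹ : ℝ≥0∞) ^ k) ^ s * (2 * (((2⁻¹ : ℝ≥0∞) ^ k) ^ t * N) * Z) := by
        gcongr
        exact (ENNReal.div_le_iff hZ₀ hZ).1 h
    _ = _ := by rw [ENNReal.rpow_add _ _ h₀ h₁]; ring

/-- A discretised form of Federer's slicing inequality `∫⁎ H^t(S_b) dH^s(b) ≲ H^{s+t}(S)`. -/
lemma exists_cover_tsum_le_of_oneLeCoverSum {S : Set ((Fin m → ℝ) × Y)} {G : Set (Fin m → ℝ)}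
    {s t ε : ℝ} (hs : 0 ≤ s) (ht : 0 < t) (hε : 0 < ε) {ρ : ℝ≥0∞}
    (hG : ∀ b ∈ G, OneLeCoverSum (ℕ × (Fin m → Fin 3)) t ρ (Prod.mk b ⁻¹' S))
    {U : ℕ → Set ((Fin m → ℝ) × Y)} {κ : ℕ → ℕ} (hSU : S ⊆ ⋃ i, U i)
    (hU : ∀ i, ediam (U i) ≤ 2⁻¹ ^ κ i) (hκ : ∀ i, 2⁻¹ ^ κ i ≤ ρ) :
    ∃ T : ℕ × (Fin m → ℤ) → Set (Fin m → ℝ), G ⊆ ⋃ q, T q ∧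
      ∑' q, ediam (T q) ^ (s + ε) ≤
        2 * 3 ^ m * (∑' k : ℕ, ((2⁻¹ : ℝ≥0∞) ^ k) ^ ε) *
          ∑' i, ((2⁻¹ : ℝ≥0∞) ^ κ i) ^ (s + t) := by
  classical
  choose z₀ hz₀ using fun i => exists_dyadicIndex_eq_of_ediam_le
    ((LipschitzWith.prod_fst.ediam_image_le (U i)).trans (by simpa using hU i))
  set φ := cubeLabel κ z₀
  set Z := ∑' k : ℕ, ((2⁻¹ : ℝ≥0∞) ^ k) ^ ε
  have hZ₀ : Z ≠ 0 := ne_of_gt <| lt_of_lt_of_le (by simp) (ENNReal.le_tsum 0)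
  have hZ : Z ≠ ⊤ := tsum_inv_two_pow_rpow_ne_top hε
  -- a cube is kept when it carries at least its share `2⁻ᵏᵋ / Z` of the slice cost
  let heavy (q : ℕ × (Fin m → ℤ)) : Prop :=
    ((2⁻¹ : ℝ≥0∞) ^ q.1) ^ ε / Z ≤ 2 * (((2⁻¹ : ℝ≥0∞) ^ q.1) ^ t * fiberCount φ q)
  refine ⟨fun q => if heavy q then dyadicIndex q.1 ⁻¹' {q.2} else ∅, fun b hb => ?_, ?_⟩
  · have hθ : ∑' k : ℕ, ((2⁻¹ : ℝ≥0∞) ^ k) ^ ε / Z ≤ 1 := by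
      simp_rw [div_eq_mul_inv]
      rw [ENNReal.tsum_mul_right, ENNReal.mul_inv_cancel hZ₀ hZ]
    obtain ⟨k, hk⟩ := exists_le_two_mul_of_one_le_tsum hθ
      (one_le_tsum_fiberCount_cubeLabel ht hSU hU hκ (fun i q hq => hz₀ i q.1 ⟨q, hq, rfl⟩)
        (hG b hb))
    exact mem_iUnion.2 ⟨(k, dyadicIndex k b), by simp only [heavy]; rw [if_pos hk]; rfl⟩
  have hcost q : ediam (if heavy q then dyadicIndex q.1 ⁻¹' {q.2} else ∅) ^ (s + ε) ≤
      2 * Z * (((2⁻¹ : ℝ≥0∞) ^ q.1) ^ (s + t) * fiberCount φ q) := by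
    split_ifs with hq
    · exact ediam_preimage_dyadicIndex_rpow_le q.2 (by positivity) hZ₀ hZ hq
    · simp [ENNReal.zero_rpow_of_pos (by positivity : 0 < s + ε)]
  calc _ ≤ ∑' q, 2 * Z * (((2⁻¹ : ℝ≥0∞) ^ q.1) ^ (s + t) * fiberCount φ q) :=
        ENNReal.tsum_le_tsum hcost
    _ = 2 * Z * ∑' p : ℕ × (Fin m → Fin 3), ((2⁻¹ : ℝ≥0∞) ^ κ p.1) ^ (s + t) := by
        rw [ENNReal.tsum_mul_left,
          tsum_mul_fiberCount φ fun q => ((2⁻¹ : ℝ≥0∞) ^ q.1) ^ (s + t)]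
        rfl
    _ = _ := by
        simp only [ENNReal.tsum_prod', tsum_fintype, Finset.sum_const, Finset.card_univ,
          Fintype.card_fun, Fintype.card_fin, nsmul_eq_mul, ENNReal.tsum_mul_left]
        push_cast
        ring

variable [MeasurableSpace Y] [BorelSpace Y]

lemma hausdorffMeasure_eq_zero_of_oneLeCoverSum {S : Set ((Fin m → ℝ) × Y)}
    {G : Set (Fin m → ℝ)} {s t ε : ℝ} (hs : 0 ≤ s) (ht : 0 < t) (hε : 0 < ε) {ρ : ℝ≥0∞}
    (hρ : ρ ≠ 0) (hG : ∀ b ∈ G, OneLeCoverSum (ℕ × (Fin m → Fin 3)) t ρ (Prod.mk b ⁻¹' S))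
    (hS : μH[s + t] S = 0) : μH[s + ε] G = 0 := by
  have hst : 0 < s + t := by positivity
  set K : ℝ≥0∞ := 2 * 3 ^ m * ∑' k : ℕ, ((2⁻¹ : ℝ≥0∞) ^ k) ^ ε
  have hK : K ≠ ⊤ := by simp [K, ENNReal.mul_eq_top, tsum_inv_two_pow_rpow_ne_top hε]
  refine hausdorffMeasure_eq_zero_of_forall_exists_cover (ℕ × (Fin m → ℤ)) (by positivity)
    fun c hc => ?_
  obtain ⟨U, κ, hSU, hU, hsum⟩ := exists_dyadic_cover_of_hausdorffMeasure_eq_zero hst hS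
    (c := min (ρ ^ (s + t)) (c / K))
    (lt_min (ENNReal.rpow_pos_of_nonneg (pos_iff_ne_zero.2 hρ) hst.le)
      (ENNReal.div_pos hc.ne' hK))
  have hκ i : 2⁻¹ ^ κ i ≤ ρ := (ENNReal.rpow_le_rpow_iff hst).1 <|
    (ENNReal.le_tsum i).trans (hsum.trans (min_le_left _ _))
  obtain ⟨T, hGT, hT⟩ := exists_cover_tsum_le_of_oneLeCoverSum hs ht hε hG hSU hU hκ
  exact ⟨T, hGT, hT.trans ((mul_le_mul_right (hsum.trans (min_le_right _ _)) K).trans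
    ENNReal.mul_div_le)⟩

theorem coe_add_le_dimH_of_lt_dimH_slices (S : Set ((Fin m → ℝ) × Y)) (B : Set (Fin m → ℝ))
    {s t : ℝ≥0} (ht : 0 < t) (hB : (s : ℝ≥0∞) < dimH B)
    (hS : ∀ b ∈ B, (t : ℝ≥0∞) < dimH (Prod.mk b ⁻¹' S)) : ((s + t : ℝ≥0) : ℝ≥0∞) ≤ dimH S := by
  obtain ⟨ε, hε, hsε⟩ := ENNReal.lt_iff_exists_add_pos_lt.1 hB
  let G (n : ℕ) : Set (Fin m → ℝ) :=
    {b | OneLeCoverSum (ℕ × (Fin m → Fin 3)) t (2⁻¹ ^ n) (Prod.mk b ⁻¹' S)}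
  have hBG : B ⊆ ⋃ n, G n := fun b hb => mem_iUnion.2 <|
    exists_oneLeCoverSum_of_one_lt_hausdorffMeasure _ <| by
      rw [hausdorffMeasure_of_lt_dimH (hS b hb)]; exact one_lt_top
  obtain ⟨n, hn⟩ : ∃ n, μH[↑(s + ε)] (G n) ≠ 0 := by
    by_contra! h
    exact ENNReal.top_ne_zero <|
      (hausdorffMeasure_of_lt_dimH (by exact_mod_cast hsε)).symm.trans
        (measure_mono_null hBG (measure_iUnion_null h))
  refine le_dimH_of_hausdorffMeasure_ne_zero fun hS₀ => hn ?_
  push_cast at hS₀ ⊢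
  exact hausdorffMeasure_eq_zero_of_oneLeCoverSum s.2 ht hε (by simp) (fun b hb => hb) hS₀

theorem add_le_dimH_of_le_dimH_slices (S : Set ((Fin m → ℝ) × Y)) (B : Set (Fin m → ℝ))
    {a c : ℝ≥0∞} (ha : a ≠ 0) (hc : c ≠ 0) (hB : a ≤ dimH B)
    (hS : ∀ b ∈ B, c ≤ dimH (Prod.mk b ⁻¹' S)) : a + c ≤ dimH S := by
  refine le_of_forall_lt_imp_le_of_dense fun x hx => ?_
  obtain ⟨a', ha', c', hc', hx⟩ := ENNReal.exists_lt_add_of_lt_add hx ha hc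
  obtain ⟨c'', hc'c'', hc''⟩ := exists_between hc'
  lift a' to ℝ≥0 using ha'.ne_top
  lift c'' to ℝ≥0 using hc''.ne_top
  calc x ≤ a' + c'' := hx.le.trans (by gcongr)
    _ ≤ dimH S := by
      exact_mod_cast coe_add_le_dimH_of_lt_dimH_slices S B
        (ENNReal.coe_pos.1 (hc'c''.trans_le' zero_le)) (ha'.trans_le hB)
        fun b hb => hc''.trans_le (hS b hb)

end Slicing

section Kite

variable {P : Type*} [PseudoMetricSpace P]

def kiteSet (E : Set P) (x : P) : Set (Fin 5 → ℝ) :=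
  {v | ∃ y₁ ∈ E, ∃ y₂ ∈ E, ∃ y₃ ∈ E, ∃ y₄ ∈ E,
    List.Pairwise (· ≠ ·) [x, y₁, y₂, y₃, y₄] ∧
    v = ![dist x y₁, dist y₁ y₂, dist y₂ x, dist y₁ y₃, dist y₃ y₄]}

/-- Splits the kite's edge lengths into those of the triangle and those of the 2-chain. -/
def unglue (v : Fin 5 → ℝ) : (Fin 3 → ℝ) × (Fin 2 → ℝ) := (![v 0, v 1, v 2], ![v 3, v 4])

lemma lipschitzWith_unglue : LipschitzWith 1 unglue := by
  refine LipschitzWith.of_dist_le_mul fun u v => ?_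
  rw [NNReal.coe_one, one_mul, Prod.dist_eq, max_le_iff, dist_pi_le_iff dist_nonneg,
    dist_pi_le_iff dist_nonneg]
  constructor <;> intro i <;> fin_cases i <;> exact dist_le_pi_dist u v _

lemma mk_mem_image_unglue_kiteSet {E E₁ E₂ : Set P} (hE₁ : E₁ ⊆ E) (hE₂ : E₂ ⊆ E)
    (hdisj : Disjoint E₁ E₂) {x y₁ y₂ y₃ y₄ : P} (hx : x ∈ E₁) (hy₁ : y₁ ∈ E₁) (hy₂ : y₂ ∈ E₁)
    (hy₃ : y₃ ∈ E₂) (hy₄ : y₄ ∈ E₂) (hxy₁ : x ≠ y₁) (hxy₂ : x ≠ y₂) (hy₁₂ : y₁ ≠ y₂)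
    (hy₃₄ : y₃ ≠ y₄) :
    (![dist x y₁, dist y₁ y₂, dist y₂ x], ![dist y₁ y₃, dist y₃ y₄]) ∈ unglue '' kiteSet E x := by
  have hne {a b} (ha : a ∈ E₁) (hb : b ∈ E₂) : a ≠ b := hdisj.ne_of_mem ha hb
  refine ⟨_, ⟨y₁, hE₁ hy₁, y₂, hE₁ hy₂, y₃, hE₂ hy₃, y₄, hE₂ hy₄, ?_, rfl⟩, ?_⟩
  · simp [hxy₁, hxy₂, hy₁₂, hy₃₄, hne hx hy₃, hne hx hy₄, hne hy₁ hy₃, hne hy₁ hy₄, hne hy₂ hy₃,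
      hne hy₂ hy₄]
  · ext i <;> fin_cases i <;> rfl

end Kite

theorem stmt_16_general (d : ℕ)
    (E E₁ E₂ : Set (EuclideanSpace ℝ (Fin d)))
    (hE1 : E₁ ⊆ E) (hE2 : E₂ ⊆ E) (hdisj : Disjoint E₁ E₂)
    (γ₁ γ₂ : ℝ) (hγ₁ : 0 < γ₁) (hγ₂ : 0 < γ₂)
    (htri : ∃ x ∈ E₁, ENNReal.ofReal γ₁ ≤
      dimH {v : Fin 3 → ℝ | ∃ y₁ ∈ E₁, ∃ y₂ ∈ E₁,
        x ≠ y₁ ∧ x ≠ y₂ ∧ y₁ ≠ y₂ ∧ v = ![dist x y₁, dist y₁ y₂, dist y₂ x]})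
    (hchain : ∀ y₁ ∈ E₁, ENNReal.ofReal γ₂ ≤
      dimH {v : Fin 2 → ℝ | ∃ y₃ ∈ E₂, ∃ y₄ ∈ E₂,
        y₃ ≠ y₄ ∧ v = ![dist y₁ y₃, dist y₃ y₄]}) :
    ∃ x ∈ E, ENNReal.ofReal (γ₁ + γ₂) ≤
      dimH {v : Fin 5 → ℝ | ∃ y₁ ∈ E, ∃ y₂ ∈ E, ∃ y₃ ∈ E, ∃ y₄ ∈ E,
        List.Pairwise (· ≠ ·) [x, y₁, y₂, y₃, y₄] ∧
        v = ![dist x y₁, dist y₁ y₂, dist y₂ x, dist y₁ y₃, dist y₃ y₄]} := by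
  obtain ⟨x, hx, htri⟩ := htri
  refine ⟨x, hE1 hx, ?_⟩
  rw [ENNReal.ofReal_add hγ₁.le hγ₂.le]
  refine (add_le_dimH_of_le_dimH_slices _ _ (ENNReal.ofReal_pos.2 hγ₁).ne'
    (ENNReal.ofReal_pos.2 hγ₂).ne' htri ?_).trans (lipschitzWith_unglue.dimH_image_le _)
  rintro _ ⟨y₁, hy₁, y₂, hy₂, hxy₁, hxy₂, hy₁₂, rfl⟩
  refine (hchain y₁ hy₁).trans (dimH_mono ?_)
  rintro _ ⟨y₃, hy₃, y₄, hy₄, hy₃₄, rfl⟩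
  exact mk_mem_image_unglue_kiteSet hE1 hE2 hdisj hx hy₁ hy₂ hy₃ hy₄ hxy₁ hxy₂ hy₁₂ hy₃₄

/-- Gluing a pinned triangle and a pinned 2-chain into a kite: if some `x ∈ E₁` pins a
triangle edge-length set of dimension `≥ γ₁` in `E₁`, and every `y₁ ∈ E₁` pins a 2-chain
edge-length set of dimension `≥ γ₂` in `E₂`, then some `x ∈ E` pins a kite edge-length
set in `ℝ⁵` of dimension `≥ γ₁ + γ₂`. -/
theorem stmt_16 (d : ℕ) (hd : 1 ≤ d)
    (E E₁ E₂ : Set (EuclideanSpace ℝ (Fin d))) (hE : IsCompact E)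
    (hE1 : E₁ ⊆ E) (hE2 : E₂ ⊆ E) (hdisj : Disjoint E₁ E₂)
    (μ : Measure (EuclideanSpace ℝ (Fin d)))
    (hμfin : IsFiniteMeasure μ) (hμsupp : μ Eᶜ = 0)
    (hfrost : ∃ s Cf : ℝ, 0 < s ∧ 0 < Cf ∧ ∀ (x : EuclideanSpace ℝ (Fin d)) (r : ℝ),
      0 < r → μ (Metric.ball x r) ≤ ENNReal.ofReal (Cf * r ^ s))
    (hμ1 : 0 < μ E₁) (hμ2 : 0 < μ E₂)
    (γ₁ γ₂ : ℝ) (hγ₁ : 0 < γ₁) (hγ₂ : 0 < γ₂)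
    (htri : ∃ x ∈ E₁, ENNReal.ofReal γ₁ ≤
      dimH {v : Fin 3 → ℝ | ∃ y₁ ∈ E₁, ∃ y₂ ∈ E₁,
        x ≠ y₁ ∧ x ≠ y₂ ∧ y₁ ≠ y₂ ∧ v = ![dist x y₁, dist y₁ y₂, dist y₂ x]})
    (hchain : ∀ y₁ ∈ E₁, ENNReal.ofReal γ₂ ≤
      dimH {v : Fin 2 → ℝ | ∃ y₃ ∈ E₂, ∃ y₄ ∈ E₂,
        y₃ ≠ y₄ ∧ v = ![dist y₁ y₃, dist y₃ y₄]}) :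
    ∃ x ∈ E, ENNReal.ofReal (γ₁ + γ₂) ≤
      dimH {v : Fin 5 → ℝ | ∃ y₁ ∈ E, ∃ y₂ ∈ E, ∃ y₃ ∈ E, ∃ y₄ ∈ E,
        List.Pairwise (· ≠ ·) [x, y₁, y₂, y₃, y₄] ∧
        v = ![dist x y₁, dist y₁ y₂, dist y₂ x, dist y₁ y₃, dist y₃ y₄]} :=
  stmt_16_general d E E₁ E₂ hE1 hE2 hdisj γ₁ γ₂ hγ₁ hγ₂ htri hchain
end

section
/- (Structure theorem for Lebesgue measure, base-to-chain upgrade.) Let d ≥ 2 and α > 0. Suppose that for every pair of compact sets E_1, E_2 ⊂ ℝ^d with positive α-dimensional Hausdorff measure and Frostman probability measures μ_1, μ_2 (satisfying μ_i(B(x,r)) ≲ r^α), one has μ_2({x ∈ E_2 : |Δ_x(E_1)|_1 > 0}) > 0, where Δ_x(E) = {|x−y| : y ∈ E}. Then for every integer k ≥ 1 and every such pair E_1, E_2, one has μ_2({x ∈ E_2 : |S^k_x(E_1)|_k > 0}) > 0, where S^k_x(E) is the set of k-tuples (|x−x_1|, |x_1−x_2|, …, |x_{k−1}−x_k|) over distinct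 points x, x_1, …, x_k ∈ E, and |·|_k denotes k-dimensional Lebesgue measure. -/
open MeasureTheory ENNReal

/-- The pinned distance set `Δ_x(E) = {|x − y| : y ∈ E}`. -/
def PDist {d : ℕ} (x : EuclideanSpace ℝ (Fin d)) (E : Set (EuclideanSpace ℝ (Fin d))) :
    Set ℝ :=
  {t | ∃ y ∈ E, t = dist x y}

/-- The pinned non-degenerate `k`-chain edge-length set
`S^k_x(E) = {(|x−x₁|, |x₁−x₂|, …, |x_{k−1}−x_k|) : x, x₁, …, x_k ∈ E distinct}`. -/
def SkPinned {d : ℕ} (k : ℕ) (x : EuclideanSpace ℝ (Fin d))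
    (E : Set (EuclideanSpace ℝ (Fin d))) : Set (Fin k → ℝ) :=
  {v | ∃ p : Fin (k + 1) → EuclideanSpace ℝ (Fin d), p 0 = x ∧
    (∀ j : Fin k, p j.succ ∈ E) ∧ Function.Injective p ∧
    ∀ j : Fin k, v j = dist (p j.castSucc) (p j.succ)}

/-- A Frostman probability measure for exponent `α` on `E`: a Borel probability measure
supported on `E` with `μ(B(x,r)) ≲ r^α`. -/
def Frostman {d : ℕ} (α : ℝ) (E : Set (EuclideanSpace ℝ (Fin d)))
    (μ : Measure (EuclideanSpace ℝ (Fin d))) : Prop :=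
  IsProbabilityMeasure μ ∧ μ Eᶜ = 0 ∧
    ∃ Cf : ℝ, 0 < Cf ∧ ∀ (x : EuclideanSpace ℝ (Fin d)) (r : ℝ), 0 < r →
      μ (Metric.ball x r) ≤ ENNReal.ofReal (Cf * r ^ α)

/-!
Induction on `k`, the case `k = 0` being trivial. For the step, removing from `E₁` a small ball
centred in the support of `μ₂` leaves a compact `A ⊆ E₁` of positive `μ₁`-mass such that
`E₂ \ A` still has positive `μ₂`-mass. By induction, a compact `K ⊆ E₁` of positive `μ₁`-mass
consists of pins `y` with `|S^k_y(A)| > 0`, and the hypothesis applied to `K` and a compact piece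
of `E₂ \ A` gives positively many pins `x ∉ A` with `|Δ_x(K)| > 0`. For such `x`, the set
`S^{k+1}_x(E₁)` contains `{t} × S^k_y(A)` for every `t = |x − y| ∈ Δ_x(K) \ {0}`, hence has
positive measure by Fubini. Normalised restrictions of Frostman measures are again Frostman, and
by the mass distribution principle they give the sets positive Hausdorff measure, so the
hypothesis does apply to these subsets.
-/

open Metric Set Filter Topology ProbabilityTheory

section BallBound

variable {X : Type*} [MeasurableSpace X] {μ : Measure X} {C α : ℝ}

lemma measure_le_ofReal_mul_diam_rpow [PseudoMetricSpace X] (hα : 0 ≤ α)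
    (hμ : ∀ x r, 0 < r → μ (ball x r) ≤ ENNReal.ofReal (C * r ^ α)) {s : Set X}
    (hs : Bornology.IsBounded s) : μ s ≤ ENNReal.ofReal (C * diam s ^ α) := by
  rcases s.eq_empty_or_nonempty with rfl | ⟨x, hx⟩
  · simp
  have hcont : ContinuousAt (fun r : ℝ => ENNReal.ofReal (C * r ^ α)) (diam s) :=
    ENNReal.continuous_ofReal.continuousAt.comp
      (continuousAt_const.mul (Real.continuousAt_rpow_const _ _ (Or.inr hα)))
  refine ge_of_tendsto (hcont.tendsto.mono_left (nhdsWithin_le_nhds (s := Ioi (diam s)))) ?_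
  filter_upwards [self_mem_nhdsWithin] with r (hr : diam s < r)
  refine (measure_mono fun y hy => ?_).trans (hμ x r (diam_nonneg.trans_lt hr))
  exact mem_ball.2 ((dist_le_diam_of_mem hs hy hx).trans_lt hr)

lemma ofReal_inv_smul_le_hausdorffMeasure [MetricSpace X] [BorelSpace X] (hα : 0 ≤ α)
    (hC : 0 < C) (hμ : ∀ x r, 0 < r → μ (ball x r) ≤ ENNReal.ofReal (C * r ^ α)) :
    (ENNReal.ofReal C)⁻¹ • μ ≤ μH[α] := by
  refine Measure.le_hausdorffMeasure α _ 1 one_pos fun s hs => ?_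
  have hs_top : ediam s ≠ ∞ := (hs.trans_lt one_lt_top).ne
  rw [Measure.smul_apply, smul_eq_mul, ENNReal.inv_mul_le_iff (by simpa using hC) ofReal_ne_top]
  calc μ s ≤ ENNReal.ofReal (C * diam s ^ α) :=
        measure_le_ofReal_mul_diam_rpow hα hμ (isBounded_iff_ediam_ne_top.2 hs_top)
    _ = ENNReal.ofReal C * ediam s ^ α := by
        rw [ENNReal.ofReal_mul hC.le, ← ENNReal.ofReal_rpow_of_nonneg diam_nonneg hα, diam,
          ENNReal.ofReal_toReal hs_top]

end BallBound

namespace Frostman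

variable {d : ℕ} {α : ℝ} {E : Set (EuclideanSpace ℝ (Fin d))}
  {μ : Measure (EuclideanSpace ℝ (Fin d))}

lemma measure_eq_one (hμ : Frostman α E μ) (hE : MeasurableSet E) : μ E = 1 :=
  haveI := hμ.1
  (prob_compl_eq_zero_iff hE).1 hμ.2.1

lemma hausdorffMeasure_pos (hμ : Frostman α E μ) (hα : 0 ≤ α) (hE : MeasurableSet E) :
    0 < μH[α] E := by
  have hμE := hμ.measure_eq_one hE
  obtain ⟨-, -, C, hC, hball⟩ := hμ
  refine lt_of_lt_of_le ?_
    (Measure.le_iff'.1 (ofReal_inv_smul_le_hausdorffMeasure hα hC hball) E)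
  simp [hμE]

lemma cond (hμ : Frostman α E μ) {K : Set (EuclideanSpace ℝ (Fin d))} (hK : MeasurableSet K)
    (hμK : μ K ≠ 0) : Frostman α K μ[|K] := by
  obtain ⟨hprob, -, C, hC, hball⟩ := hμ
  have hμK_top : μ K ≠ ∞ := measure_ne_top μ K
  refine ⟨cond_isProbabilityMeasure hμK, by simp [cond_apply hK], (μ K).toReal⁻¹ * C,
    by have := ENNReal.toReal_pos hμK hμK_top; positivity, fun x r hr => ?_⟩
  rw [cond_apply hK, mul_assoc, ENNReal.ofReal_mul (by positivity),
    ENNReal.ofReal_inv_of_pos (ENNReal.toReal_pos hμK hμK_top), ENNReal.ofReal_toReal hμK_top]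
  gcongr
  exact (measure_mono inter_subset_right).trans (hball x r hr)

lemma exists_forall_measure_ball_lt_one (hμ : Frostman α E μ) (hα : 0 < α) :
    ∃ r > 0, ∀ x, μ (ball x r) < 1 := by
  obtain ⟨-, -, C, hC, hball⟩ := hμ
  refine ⟨(2 * C)⁻¹ ^ α⁻¹, by positivity, fun x => (hball x _ (by positivity)).trans_lt ?_⟩
  rw [Real.rpow_inv_rpow (by positivity) hα.ne', ENNReal.ofReal_lt_one]
  field_simp
  norm_num

lemma exists_isCompact_pos_diff_pos (hμ : Frostman α E μ) (hα : 0 < α) (hE : IsCompact E)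
    {E₂ : Set (EuclideanSpace ℝ (Fin d))} {μ₂ : Measure (EuclideanSpace ℝ (Fin d))}
    (hμ₂ : μ₂ ≠ 0) (hE₂ : μ₂ E₂ᶜ = 0) :
    ∃ A ⊆ E, IsCompact A ∧ 0 < μ A ∧ 0 < μ₂ (E₂ \ A) := by
  obtain ⟨x₀, hx₀⟩ := Measure.nonempty_support hμ₂
  obtain ⟨r, hr, hball⟩ := hμ.exists_forall_measure_ball_lt_one hα
  refine ⟨E \ ball x₀ r, sdiff_subset, hE.diff isOpen_ball, ?_, ?_⟩
  · calc 0 < 1 - μ (ball x₀ r) := tsub_pos_of_lt (hball x₀)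
      _ = μ E - μ (ball x₀ r) := by rw [hμ.measure_eq_one hE.measurableSet]
      _ ≤ μ (E \ ball x₀ r) := le_measure_sdiff
  · calc 0 < μ₂ (ball x₀ r) := (Measure.mem_support_iff_forall x₀).1 hx₀ _ (ball_mem_nhds x₀ hr)
      _ = μ₂ (ball x₀ r ∩ E₂) := (measure_inter_conull hE₂).symm
      _ ≤ μ₂ (E₂ \ (E \ ball x₀ r)) := measure_mono fun y hy => ⟨hy.2, fun h => h.2 hy.1⟩

end Frostman

lemma isOpen_setOf_injective {ι X : Type*} [Finite ι] [TopologicalSpace X] [T2Space X] :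
    IsOpen {p : ι → X | Function.Injective p} := by
  simp only [Function.injective_iff_pairwise_ne, Pairwise, ofPred_forall]
  exact isOpen_iInter_of_finite fun i => isOpen_iInter_of_finite fun j =>
    isOpen_iInter_of_finite fun _ => isOpen_ne_fun (continuous_apply i) (continuous_apply j)

lemma IsLocallyClosed.isSigmaCompact {X : Type*} [TopologicalSpace X] [LocallyCompactSpace X]
    [SecondCountableTopology X] {s : Set X} (hs : IsLocallyClosed s) : IsSigmaCompact s :=
  haveI := hs.locallyCompactSpace
  isSigmaCompact_iff_sigmaCompactSpace.2 inferInstance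

lemma IsSigmaCompact.measurableSet {X : Type*} [TopologicalSpace X] [T2Space X]
    [MeasurableSpace X] [OpensMeasurableSpace X] {s : Set X} (hs : IsSigmaCompact s) :
    MeasurableSet s := by
  obtain ⟨K, hK, rfl⟩ := hs
  exact .iUnion fun n => (hK n).measurableSet

lemma measurable_volume_skPinned {d k : ℕ} {A : Set (EuclideanSpace ℝ (Fin d))}
    (hA : IsClosed A) : Measurable fun x => volume (SkPinned k x A) := by
  let F : (Fin (k + 1) → EuclideanSpace ℝ (Fin d)) → EuclideanSpace ℝ (Fin d) × (Fin k → ℝ) :=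
    fun p => (p 0, fun j => dist (p j.castSucc) (p j.succ))
  let P := {p : Fin (k + 1) → EuclideanSpace ℝ (Fin d) | ∀ j : Fin k, p j.succ ∈ A} ∩
    {p | Function.Injective p}
  have hP : IsLocallyClosed P := by
    refine .inter (IsClosed.isLocallyClosed ?_) isOpen_setOf_injective.isLocallyClosed
    simp only [ofPred_forall]
    exact isClosed_iInter fun j => hA.preimage (continuous_apply j.succ)
  have hSk : ∀ x, SkPinned k x A = Prod.mk x ⁻¹' (F '' P) := by
    intro x
    ext v
    simp only [SkPinned, F, P, mem_ofPred_eq, mem_preimage, mem_image, mem_inter_iff,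
      Prod.mk.injEq, funext_iff]
    constructor
    · rintro ⟨p, hp0, hpA, hp, hv⟩
      exact ⟨p, ⟨hpA, hp⟩, hp0, fun j => (hv j).symm⟩
    · rintro ⟨p, ⟨hpA, hp⟩, hp0, hv⟩
      exact ⟨p, hp0, hpA, hp, fun j => (hv j).symm⟩
  simp_rw [hSk]
  exact measurable_measure_prodMk_left (hP.isSigmaCompact.image (by fun_prop)).measurableSet

lemma MeasureTheory.Measure.prod_pos_of_forall_slice_pos {X Y : Type*} [MeasurableSpace X]
    [MeasurableSpace Y] {μ : Measure X} {ν : Measure Y} [SFinite ν] {s : Set (X × Y)}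
    {T : Set X} (hT : 0 < μ T) (hs : ∀ t ∈ T, 0 < ν (Prod.mk t ⁻¹' s)) : 0 < μ.prod ν s := by
  refine pos_iff_ne_zero.2 fun h => hT.ne' (measure_mono_null (fun t ht => (hs t ht).ne') ?_)
  exact ae_iff.1 (Measure.measure_ae_null_of_prod_null h)

lemma volume_pos_of_forall_cons_slice_pos {k : ℕ} {S : Set (Fin (k + 1) → ℝ)} {T : Set ℝ}
    (hT : 0 < volume T) (hS : ∀ t ∈ T, 0 < volume {w : Fin k → ℝ | Fin.cons t w ∈ S}) :
    0 < volume S := by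
  have he := measurePreserving_piFinSuccAbove (fun _ : Fin (k + 1) => (volume : Measure ℝ)) 0
  rw [volume_pi, ← (he.symm _).measure_preimage_equiv S]
  refine Measure.prod_pos_of_forall_slice_pos (ν := volume) hT fun t ht => ?_
  convert hS t ht using 2
  ext w
  simp only [mem_preimage, MeasurableEquiv.piFinSuccAbove_symm_apply, Fin.insertNthEquiv_zero]
  rfl

lemma skPinned_zero_eq_univ {d : ℕ} (x : EuclideanSpace ℝ (Fin d))
    (A : Set (EuclideanSpace ℝ (Fin d))) : SkPinned 0 x A = univ :=
  eq_univ_of_forall fun _ =>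
    ⟨fun _ => x, rfl, finZeroElim, fun _ _ _ => Subsingleton.elim (α := Fin 1) _ _, finZeroElim⟩

lemma cons_dist_mem_skPinned_succ {d k : ℕ} {A E : Set (EuclideanSpace ℝ (Fin d))}
    {x y : EuclideanSpace ℝ (Fin d)} (hAE : A ⊆ E) (hy : y ∈ E) (hxA : x ∉ A) (hxy : x ≠ y)
    {w : Fin k → ℝ} (hw : w ∈ SkPinned k y A) :
    (Fin.cons (dist x y) w : Fin (k + 1) → ℝ) ∈ SkPinned (k + 1) x E := by
  obtain ⟨q, hq0, hqA, hq, hw⟩ := hw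
  refine ⟨Fin.cons x q, rfl, Fin.cases (by simpa [hq0]) fun j => hAE (by simpa using hqA j),
    Fin.cons_injective_iff.2 ⟨?_, hq⟩, Fin.cases (by simp [hq0]) fun j => by simpa using hw j⟩
  rintro ⟨i, hi⟩
  cases i using Fin.cases with
  | zero => exact hxy (hi.symm.trans hq0)
  | succ j => exact hxA (hi ▸ hqA j)

lemma volume_skPinned_succ_pos {d k : ℕ} {A E K : Set (EuclideanSpace ℝ (Fin d))}
    {x : EuclideanSpace ℝ (Fin d)} (hAE : A ⊆ E) (hxA : x ∉ A)
    (hK : ∀ y ∈ K, y ∈ E ∧ 0 < volume (SkPinned k y A)) (hx : 0 < volume (PDist x K)) :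
    0 < volume (SkPinned (k + 1) x E) := by
  refine volume_pos_of_forall_cons_slice_pos (T := PDist x K \ {0})
    (by rwa [measure_sdiff_null (measure_singleton 0)]) ?_
  rintro t ⟨⟨y, hy, rfl⟩, hxy⟩
  replace hxy : x ≠ y := fun h => hxy (by simp [h])
  exact (hK y hy).2.trans_le
    (measure_mono fun w hw => cons_dist_mem_skPinned_succ hAE (hK y hy).1 hxA hxy hw)

def PinnedPositive {d : ℕ} {Y : Type*} [MeasureSpace Y] (α : ℝ)
    (S : EuclideanSpace ℝ (Fin d) → Set (EuclideanSpace ℝ (Fin d)) → Set Y) : Prop :=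
  ∀ E₁ E₂ : Set (EuclideanSpace ℝ (Fin d)), IsCompact E₁ → IsCompact E₂ →
    ∀ μ₁ μ₂ : Measure (EuclideanSpace ℝ (Fin d)), Frostman α E₁ μ₁ → Frostman α E₂ μ₂ →
      0 < μ₂ {x ∈ E₂ | 0 < volume (S x E₁)}

namespace PinnedPositive

variable {d : ℕ} {α : ℝ}

lemma skPinned_zero : PinnedPositive α (SkPinned (d := d) 0) := by
  intro E₁ E₂ _ hE₂ μ₁ μ₂ _ hμ₂
  simp [skPinned_zero_eq_univ, volume_pi, hμ₂.measure_eq_one hE₂.measurableSet]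

lemma skPinned_succ (hα : 0 < α) (hPDist : PinnedPositive α (PDist (d := d))) {k : ℕ}
    (hk : PinnedPositive α (SkPinned (d := d) k)) :
    PinnedPositive α (SkPinned (d := d) (k + 1)) := by
  intro E₁ E₂ hE₁ hE₂ μ₁ μ₂ hμ₁ hμ₂
  have := hμ₁.1
  have := hμ₂.1
  obtain ⟨A, hAE, hA, hμ₁A, hμ₂A⟩ :=
    hμ₁.exists_isCompact_pos_diff_pos hα hE₁ (IsProbabilityMeasure.ne_zero μ₂) hμ₂.2.1
  have hG : 0 < μ₁ {y ∈ E₁ | 0 < volume (SkPinned k y A)} :=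
    hk A E₁ hA hE₁ _ μ₁ (hμ₁.cond hA.measurableSet hμ₁A.ne') hμ₁
  obtain ⟨K, hKG, hK, hμ₁K⟩ := MeasurableSet.exists_lt_isCompact
    (hE₁.measurableSet.inter (measurable_volume_skPinned hA.isClosed measurableSet_Ioi)) hG
  obtain ⟨K₂, hK₂, hK₂c, hμ₂K₂⟩ :=
    (hE₂.measurableSet.diff hA.measurableSet).exists_lt_isCompact hμ₂A
  have hpins := hPDist K K₂ hK hK₂c _ _ (hμ₁.cond hK.measurableSet hμ₁K.ne')
    (hμ₂.cond hK₂c.measurableSet hμ₂K₂.ne')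
  refine (cond_absolutelyContinuous.pos_mono hpins).trans_le (measure_mono ?_)
  rintro x ⟨hxK₂, hx⟩
  exact ⟨(hK₂ hxK₂).1, volume_skPinned_succ_pos hAE (hK₂ hxK₂).2 (fun y hy => hKG hy) hx⟩

lemma skPinned (hα : 0 < α) (hPDist : PinnedPositive α (PDist (d := d))) :
    ∀ k, PinnedPositive α (SkPinned (d := d) k)
  | 0 => skPinned_zero
  | k + 1 => skPinned_succ hα hPDist (skPinned hα hPDist k)

end PinnedPositive

theorem stmt_17_general (d : ℕ) (α : ℝ) (hα : 0 < α)
    (H : ∀ E₁ E₂ : Set (EuclideanSpace ℝ (Fin d)), IsCompact E₁ → IsCompact E₂ →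
      0 < μH[α] E₁ → 0 < μH[α] E₂ →
      ∀ μ₁ μ₂ : Measure (EuclideanSpace ℝ (Fin d)),
        Frostman α E₁ μ₁ → Frostman α E₂ μ₂ →
        0 < μ₂ {x ∈ E₂ | 0 < volume (PDist x E₁)}) :
    ∀ k : ℕ, 1 ≤ k →
    ∀ E₁ E₂ : Set (EuclideanSpace ℝ (Fin d)), IsCompact E₁ → IsCompact E₂ →
      0 < μH[α] E₁ → 0 < μH[α] E₂ →
      ∀ μ₁ μ₂ : Measure (EuclideanSpace ℝ (Fin d)),
        Frostman α E₁ μ₁ → Frostman α E₂ μ₂ →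
        0 < μ₂ {x ∈ E₂ | 0 < volume (SkPinned k x E₁)} := by
  intro k _ E₁ E₂ hE₁ hE₂ _ _ μ₁ μ₂ hμ₁ hμ₂
  have hPDist : PinnedPositive α (PDist (d := d)) := fun E₁ E₂ hE₁ hE₂ μ₁ μ₂ hμ₁ hμ₂ =>
    H E₁ E₂ hE₁ hE₂ (hμ₁.hausdorffMeasure_pos hα.le hE₁.measurableSet)
      (hμ₂.hausdorffMeasure_pos hα.le hE₂.measurableSet) μ₁ μ₂ hμ₁ hμ₂
  exact PinnedPositive.skPinned hα hPDist k E₁ E₂ hE₁ hE₂ μ₁ μ₂ hμ₁ hμ₂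

/-- Structure theorem for Lebesgue measure: if for all pairs of compact sets of positive
`α`-dimensional Hausdorff measure with Frostman measures, a positive measure of pins `x`
have `|Δ_x(E₁)|₁ > 0`, then for every `k ≥ 1` a positive measure of pins `x` have
`|S^k_x(E₁)|_k > 0`. -/
theorem stmt_17 (d : ℕ) (hd : 2 ≤ d) (α : ℝ) (hα : 0 < α)
    (H : ∀ E₁ E₂ : Set (EuclideanSpace ℝ (Fin d)), IsCompact E₁ → IsCompact E₂ →
      0 < μH[α] E₁ → 0 < μH[α] E₂ →
      ∀ μ₁ μ₂ : Measure (EuclideanSpace ℝ (Fin d)),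
        Frostman α E₁ μ₁ → Frostman α E₂ μ₂ →
        0 < μ₂ {x ∈ E₂ | 0 < volume (PDist x E₁)}) :
    ∀ k : ℕ, 1 ≤ k →
    ∀ E₁ E₂ : Set (EuclideanSpace ℝ (Fin d)), IsCompact E₁ → IsCompact E₂ →
      0 < μH[α] E₁ → 0 < μH[α] E₂ →
      ∀ μ₁ μ₂ : Measure (EuclideanSpace ℝ (Fin d)),
        Frostman α E₁ μ₁ → Frostman α E₂ μ₂ →
        0 < μ₂ {x ∈ E₂ | 0 < volume (SkPinned k x E₁)} :=
  stmt_17_general d α hα H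
end
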